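/- arXiv:2110.14416 — 2 statements merged into one kernel-verified Lean document; each statement's English description precedes it below -/
import Mathlib

section
/- The linear layer L_{k→l} defined by L(A)_j = Σ_μ Σ_i B^μ_{i,j} A_i w_μ + Σ_λ C^λ_j b_λ is permutation equivariant: L(π·A)_j = L(A)_{π^{-1}(j)} for all permutations π ∈ S_n, tensors A ∈ R^{n^k × d}, and j ∈ [n]^l. -/
theorem Fin.comp_append {α β : Type*} {m n : ℕ} (f : α → β) (u : Fin m → α)
    (v : Fin n → α) :
    (fun a => f (Fin.append u v a)) = Fin.append (fun a => f (u a)) (fun a => f (v a)) := by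
  funext a
  refine Fin.addCases (fun p => ?_) (fun p => ?_) a <;>
    simp only [Fin.append_left, Fin.append_right]

open Matrix in
theorem Matrix.sum_vecMul_equivariant_of_invariant_kernel {α ι κ m m' R : Type*} [Fintype α]
    [Fintype ι] [DecidableEq ι] [Fintype m] [NonUnitalNonAssocSemiring R]
    (K : (ι → α) → (κ → α) → Matrix m m' R) (π : Equiv.Perm α)
    (hK : ∀ i j, K (fun a => π (i a)) (fun a => π (j a)) = K i j)
    (A : (ι → α) → m → R) (j : κ → α) :
    ∑ i, A (fun a => π⁻¹ (i a)) ᵥ* K i j =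
      ∑ i, A i ᵥ* K i (fun a => π⁻¹ (j a)) := by
  refine (Fintype.sum_equiv (Equiv.piCongrRight fun _ => π) _ _ fun i => ?_).symm
  show A i ᵥ* K i _ = A (fun a => π⁻¹ (π (i a))) ᵥ* K (fun a => π (i a)) j
  conv_lhs => rw [← hK i (fun a => π⁻¹ (j a))]
  simp only [Equiv.Perm.coe_inv, Equiv.symm_apply_apply, Equiv.apply_symm_apply]

/-- The equivariant linear layer `L(A)_j = Σ_μ Σ_i B^μ_{i,j} A_i w_μ + Σ_λ C^λ_j b_λ`
is permutation equivariant.  Since each pair `(i,j)` (resp. each `j`) lies in exactly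
one orbit `μ` (resp. `λ`), the double sum over orbits is expressed via a weight
assignment `w` on `[n]^(k+l)` (resp. a bias assignment `b` on `[n]^l`) that is
constant on orbits: `L(A)_j = Σ_i A_i · w(i,j) + b(j)`, and the theorem states
`L(π·A)_j = L(A)_{π⁻¹(j)}`. -/
theorem linear_layer_equivariant (n k l d d' : ℕ)
    (w : (Fin (k + l) → Fin n) → Matrix (Fin d) (Fin d') ℝ)
    (hw : ∀ (π : Equiv.Perm (Fin n)) (x : Fin (k + l) → Fin n),
      w (fun a => π (x a)) = w x)
    (b : (Fin l → Fin n) → Fin d' → ℝ)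
    (hb : ∀ (π : Equiv.Perm (Fin n)) (j : Fin l → Fin n),
      b (fun a => π (j a)) = b j)
    (L : ((Fin k → Fin n) → Fin d → ℝ) → (Fin l → Fin n) → Fin d' → ℝ)
    (hL : ∀ (A : (Fin k → Fin n) → Fin d → ℝ) (j : Fin l → Fin n),
      L A j = (∑ i : Fin k → Fin n, Matrix.vecMul (A i) (w (Fin.append i j))) + b j)
    (π : Equiv.Perm (Fin n)) (A : (Fin k → Fin n) → Fin d → ℝ) (j : Fin l → Fin n) :
    L (fun i => A (fun a => π⁻¹ (i a))) j = L A (fun a => π⁻¹ (j a)) := by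
  have hK : ∀ i j, w (Fin.append (fun a => π (i a)) (fun a => π (j a))) = w (Fin.append i j) :=
    fun i j => by rw [← Fin.comp_append, hw]
  rw [hL, hL,
    Matrix.sum_vecMul_equivariant_of_invariant_kernel (fun i j => w (Fin.append i j)) π hK, hb]
end

section
/- Let μ be an orbit of [n]^(k+l) under the componentwise S_n action such that for all (i,j) ∈ μ, every entry of i equals some entry of j. Then for each j ∈ [n]^l there is at most one i ∈ [n]^k with (i,j) ∈ μ. -/
/-- If `μ` is an orbit of `[n]^(k+l)` such that for every `(i,j) ∈ μ` every entry of
`i` equals some entry of `j`, then for each `j` there is at most one `i` with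
`(i,j) ∈ μ`. -/
theorem at_most_one_key_per_query (n k l : ℕ)
    (μ : Set (Fin (k + l) → Fin n))
    (hμ : ∃ x : Fin (k + l) → Fin n,
      μ = {y | ∃ π : Equiv.Perm (Fin n), y = fun a => π (x a)})
    (hcover : ∀ (i : Fin k → Fin n) (j : Fin l → Fin n), Fin.append i j ∈ μ →
      ∀ a : Fin k, ∃ b : Fin l, i a = j b)
    (j : Fin l → Fin n) (i i' : Fin k → Fin n)
    (h : Fin.append i j ∈ μ) (h' : Fin.append i' j ∈ μ) :
    i = i' := by
  obtain ⟨x, rfl⟩ := hμ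
  obtain ⟨π, hπ⟩ := h
  obtain ⟨π', hπ'⟩ := h'
  set σ : Equiv.Perm (Fin n) := π.symm.trans π' with hσ
  have key : ∀ a, σ (Fin.append i j a) = Fin.append i' j a := by
    intro a
    have h1 : Fin.append i j a = π (x a) := by rw [hπ]
    have h2 : Fin.append i' j a = π' (x a) := by rw [hπ']
    simp [hσ, h1, h2]
  have hfix : ∀ b : Fin l, σ (j b) = j b := by
    intro b
    have := key (Fin.natAdd k b)
    simpa [Fin.append_right] using this
  funext a
  obtain ⟨b, hb⟩ := hcover i j ⟨π, hπ⟩ a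
  have := key (Fin.castAdd l a)
  rw [Fin.append_left, Fin.append_left, hb, hfix b] at this
  rw [hb]; exact this
end
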